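/- arXiv:1703.10445 — 10 statements merged into one kernel-verified Lean document; each statement's English description precedes it below -/
import Mathlib

section
/- Let Φ be a minimal action of an abelian semigroup S on a topological space X, with acting maps φ_s. For each fixed acting map f = φ_t, if the set of fixed points Fix(f) is nonempty, then it is dense in X. -/
/-! Since `S` is commutative, every `φ s` commutes with `φ t` and hence maps `Fix (φ t)` into
itself; so `Fix (φ t)` contains the orbit of any of its points, which is dense by minimality. -/

open Function

section AdditiveAction

variable {S X : Type*} [AddCommSemigroup S] {φ : S → X → X}

theorem commute_of_comp_eq_add (hact : ∀ s t, φ s ∘ φ t = φ (s + t)) (s t : S) :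
    Function.Commute (φ s) (φ t) := fun x => by
  simp only [← comp_apply (f := φ s), ← comp_apply (f := φ t), hact, add_comm]

theorem range_subset_fixedPoints_of_isFixedPt (hact : ∀ s t, φ s ∘ φ t = φ (s + t)) {t : S}
    {x : X} (hx : IsFixedPt (φ t) x) : Set.range (fun s => φ s x) ⊆ fixedPoints (φ t) := by
  rintro _ ⟨s, rfl⟩
  exact (commute_of_comp_eq_add hact s t).mapsTo_fixedPoints hx

end AdditiveAction

theorem fixedPoints_dense_general {S X : Type*} [AddCommSemigroup S] [TopologicalSpace X]
    (φ : S → X → X)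
    (hact : ∀ s t, φ s ∘ φ t = φ (s + t))
    (hmin : ∀ x : X, Dense (Set.range fun s => φ s x))
    (t : S) (hfix : ∃ x, φ t x = x) :
    Dense {x | φ t x = x} := by
  obtain ⟨x, hx⟩ := hfix
  exact (hmin x).mono (range_subset_fixedPoints_of_isFixedPt hact hx)

theorem fixedPoints_dense {S X : Type*} [AddCommSemigroup S] [TopologicalSpace X]
    (φ : S → X → X) (hcont : ∀ s, Continuous (φ s))
    (hact : ∀ s t, φ s ∘ φ t = φ (s + t))
    (hmin : ∀ x : X, Dense (Set.range fun s => φ s x))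
    (t : S) (hfix : ∃ x, φ t x = x) :
    Dense {x | φ t x = x} :=
  fixedPoints_dense_general φ hact hmin t hfix
end

section
/- Let Φ be a minimal action of an abelian semigroup S on a Hausdorff space X. Then Φ is free: for every s ∈ S, the acting map φ_s is either the identity on X or has no fixed point. -/
/-! If `φ s` fixes one point `x₀`, it fixes the whole orbit of `x₀`, because every `φ t` commutes
with `φ s`. So the continuous maps `φ s` and `id` agree on a dense set, and in a Hausdorff space
this forces `φ s = id`. -/

open Function Set

theorem Function.Commute.of_comp_eq_add {S X : Type*} [AddCommSemigroup S] {φ : S → X → X}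
    (hact : ∀ s t, φ s ∘ φ t = φ (s + t)) (s t : S) : Function.Commute (φ s) (φ t) :=
  congrFun (show φ s ∘ φ t = φ t ∘ φ s by rw [hact, hact, add_comm])

theorem Function.eq_id_of_isFixedPt_of_commute_of_dense {ι X : Type*} [TopologicalSpace X]
    [T2Space X] {f : X → X} (hf : Continuous f) {g : ι → X → X}
    (hcomm : ∀ i, Function.Commute (g i) f)
    {x : X} (hx : IsFixedPt f x) (hdense : Dense (range fun i => g i x)) : f = id :=
  hf.ext_on hdense continuous_id <| by
    rintro _ ⟨i, rfl⟩
    exact hx.map (hcomm i)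

theorem minimal_action_free {S X : Type*} [AddCommSemigroup S] [TopologicalSpace X] [T2Space X]
    (φ : S → X → X) (hcont : ∀ s, Continuous (φ s))
    (hact : ∀ s t, φ s ∘ φ t = φ (s + t))
    (hmin : ∀ x : X, Dense (Set.range fun s => φ s x)) :
    ∀ s : S, φ s = id ∨ ∀ x : X, φ s x ≠ x := by
  intro s
  by_cases hfree : ∀ x, φ s x ≠ x
  · exact Or.inr hfree
  · push Not at hfree
    obtain ⟨x₀, hx₀⟩ := hfree
    exact Or.inl <| eq_id_of_isFixedPt_of_commute_of_dense (hcont s)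
      (fun t => Function.Commute.of_comp_eq_add hact t s) hx₀ (hmin x₀)
end

section
/- If X is a non-degenerate (having at least two points) Hausdorff space with the fixed point property (every continuous self-map of X has a fixed point), then X does not admit a minimal action of any abelian semigroup. -/
/-!
A fixed point `x` of `φ s` is carried by every `φ t` to another fixed point of `φ s`, since the
action is commutative; so the closed set of fixed points of `φ s` contains the dense orbit of `x`
and `φ s` is the identity. The fixed point property thus makes the whole action trivial, and its
orbits are points, which are not dense in a nontrivial T₁ space.
-/

open Function Set

theorem Continuous.eq_id_of_isFixedPt_of_dense_orbit {X ι : Type*} [TopologicalSpace X]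
    [T2Space X] {f : X → X} {g : ι → X → X} (hf : Continuous f)
    (hcomm : ∀ i, Function.Commute (g i) f) {x : X} (hx : Dense (range fun i => g i x)) (hfix : IsFixedPt f x) : f = id :=
  hf.ext_on hx continuous_id <| by
    rintro _ ⟨i, rfl⟩
    exact hfix.map (hcomm i)

theorem not_dense_singleton {X : Type*} [TopologicalSpace X] [T1Space X] [Nontrivial X] (x : X) :
    ¬ Dense ({x} : Set X) := by
  intro h
  obtain ⟨y, hy⟩ := exists_ne x
  have : y ∈ closure {x} := h.closure_eq ▸ mem_univ y
  exact hy (by simpa using this)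

theorem no_minimal_action_of_fixedPointProperty {X : Type*} [TopologicalSpace X] [T2Space X]
    [Nontrivial X]
    (hfpp : ∀ f : X → X, Continuous f → ∃ x, f x = x) :
    ∀ (S : Type*) [AddCommSemigroup S] (φ : S → X → X),
      (∀ s, Continuous (φ s)) → (∀ s t, φ s ∘ φ t = φ (s + t)) →
      ¬ (∀ x : X, Dense (Set.range fun s => φ s x)) := by
  intro S _ φ hc hcomp hmin
  have hcomm : ∀ s t, Function.Commute (φ s) (φ t) := fun s t =>
    congrFun (show φ s ∘ φ t = φ t ∘ φ s by rw [hcomp, add_comm, ← hcomp])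
  have hid : ∀ s, φ s = id := fun s =>
    let ⟨x, hx⟩ := hfpp (φ s) (hc s)
    (hc s).eq_id_of_isFixedPt_of_dense_orbit (fun t => hcomm t s) (hmin x) hx
  obtain ⟨x⟩ := ‹Nontrivial X›.to_nonempty
  refine not_dense_singleton x ((hmin x).mono ?_)
  rintro _ ⟨s, rfl⟩
  simp [hid]
end

section
/- Let Φ be a minimal action of an abelian semigroup S on a compact Hausdorff space X. Then for every nonempty open set V ⊆ X there exists a finite set F ⊆ S with X = ⋃_{r ∈ F} φ_r(V). -/
/-! Each `φ s` is onto, since its range is compact, hence closed, and contains the dense orbit of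
`φ s x`. By compactness finitely many preimages `φ t ⁻¹' V`, `t ∈ F`, cover `X`. Choose `u` with
`u = r t + t` for every `t ∈ F`; then every `x = φ u w` lies in `φ (r t) '' V` for a `t ∈ F` with
`φ t w ∈ V`. -/

open Set

theorem Finset.exists_forall_mem_exists_add_eq {S : Type*} [AddCommSemigroup S] [Nonempty S]
    (F : Finset S) : ∃ u, ∀ t ∈ F, ∃ r, r + t = u := by
  classical
  induction F using Finset.induction_on with
  | empty => exact ⟨Classical.arbitrary S, by simp⟩
  | insert a F _ ih =>
    obtain ⟨u, hu⟩ := ih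
    refine ⟨u + a, fun t ht => ?_⟩
    rcases Finset.mem_insert.mp ht with rfl | ht
    · exact ⟨u, rfl⟩
    · obtain ⟨r, rfl⟩ := hu t ht
      exact ⟨r + a, add_right_comm r a t⟩

section SemigroupAction

variable {S X : Type*} {φ : S → X → X}

theorem exists_finset_univ_subset_iUnion_preimage [TopologicalSpace X] [CompactSpace X]
    (hcont : ∀ s, Continuous (φ s)) (hmin : ∀ x : X, Dense (range fun s => φ s x))
    {V : Set X} (hV : V.Nonempty) (hVo : IsOpen V) :
    ∃ F : Finset S, univ ⊆ ⋃ t ∈ F, φ t ⁻¹' V := by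
  refine isCompact_univ.elim_finite_subcover (fun s => φ s ⁻¹' V)
    (fun s => hVo.preimage (hcont s)) fun x _ => ?_
  obtain ⟨_, ⟨s, rfl⟩, hsV⟩ := (hmin x).exists_mem_open hVo hV
  exact mem_iUnion.mpr ⟨s, hsV⟩

variable [AddCommSemigroup S]

theorem apply_comm_of_comp_eq_add (hact : ∀ s t, φ s ∘ φ t = φ (s + t)) (s t : S) (x : X) :
    φ s (φ t x) = φ t (φ s x) := by
  rw [← Function.comp_apply (f := φ s), ← Function.comp_apply (f := φ t), hact, hact, add_comm]

theorem surjective_of_dense_orbits [TopologicalSpace X] [CompactSpace X] [T2Space X] [Nonempty X]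
    (hcont : ∀ s, Continuous (φ s)) (hact : ∀ s t, φ s ∘ φ t = φ (s + t))
    (hmin : ∀ x : X, Dense (range fun s => φ s x)) (s : S) : Function.Surjective (φ s) := by
  obtain ⟨x⟩ := ‹Nonempty X›
  have hdense : Dense (range (φ s)) := (hmin (φ s x)).mono <| by
    rintro _ ⟨t, rfl⟩
    exact ⟨φ t x, apply_comm_of_comp_eq_add hact s t x⟩
  rw [← range_eq_univ, ← (isCompact_range (hcont s)).isClosed.closure_eq, hdense.closure_eq]

end SemigroupAction

theorem finite_image_cover {S X : Type*} [AddCommSemigroup S] [TopologicalSpace X]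
    [CompactSpace X] [T2Space X]
    (φ : S → X → X) (hcont : ∀ s, Continuous (φ s))
    (hact : ∀ s t, φ s ∘ φ t = φ (s + t))
    (hmin : ∀ x : X, Dense (Set.range fun s => φ s x))
    (V : Set X) (hV : V.Nonempty) (hVo : IsOpen V) :
    ∃ F : Finset S, (⋃ r ∈ F, φ r '' V) = Set.univ := by
  classical
  have : Nonempty X := ⟨hV.some⟩
  have : Nonempty S := range_nonempty_iff_nonempty.mp (hmin hV.some).nonempty
  obtain ⟨F, hF⟩ := exists_finset_univ_subset_iUnion_preimage hcont hmin hV hVo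
  obtain ⟨u, hu⟩ := F.exists_forall_mem_exists_add_eq
  choose! r hr using hu
  refine ⟨F.image r, eq_univ_of_forall fun x => ?_⟩
  obtain ⟨w, rfl⟩ := surjective_of_dense_orbits hcont hact hmin u x
  obtain ⟨t, ht, htV⟩ := mem_iUnion₂.mp (hF (mem_univ w))
  refine mem_iUnion₂.mpr ⟨r t, Finset.mem_image_of_mem r ht, φ t w, htV, ?_⟩
  rw [← hr t ht, ← hact]
  rfl
end

section
/- Let Φ be a minimal action of an abelian semigroup S on a compact Hausdorff space X. If for some nonempty open set V ⊆ X and some s ∈ S the image φ_s(V) is a singleton, then X is finite. -/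
/-!
Cover the compact space by the open sets `φ t ⁻¹' V`; by minimality every point lies in one of
them, and `φ (s + t)` collapses `φ t ⁻¹' V` to the point `x₀`. Since the maps commute, if `φ a`
and `φ b` have finite image on `A` and `B`, then `φ (a + b)` has finite image on `A ∪ B`, so
compactness yields a single `φ a` with finite range. The orbit of a point of this range stays in
it, and being dense it fills the whole space.
-/

open Set Topology

section SemigroupAction

variable {S X : Type*} [AddCommSemigroup S] {φ : S → X → X}

theorem finite_image_add_union (hact : ∀ s t, φ s ∘ φ t = φ (s + t)) {a b : S} {A B : Set X}
    (hA : (φ a '' A).Finite) (hB : (φ b '' B).Finite) : (φ (a + b) '' (A ∪ B)).Finite := by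
  rw [image_union]
  refine Finite.union ?_ ?_
  · rw [add_comm, ← hact, image_comp]
    exact hA.image _
  · rw [← hact, image_comp]
    exact hB.image _

theorem exists_finite_range_of_locally_finite_image [TopologicalSpace X] [CompactSpace X]
    [Nonempty S] (hact : ∀ s t, φ s ∘ φ t = φ (s + t))
    (hloc : ∀ x, ∃ a, ∃ U ∈ 𝓝 x, (φ a '' U).Finite) : ∃ a, (range (φ a)).Finite := by
  simp only [← image_univ]
  refine isCompact_univ.induction_on (p := fun A => ∃ a, (φ a '' A).Finite) ?_ ?_ ?_ ?_
  · exact ⟨Classical.arbitrary S, by simp⟩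
  · rintro A B hAB ⟨a, ha⟩
    exact ⟨a, ha.subset (image_mono hAB)⟩
  · rintro A B ⟨a, ha⟩ ⟨b, hb⟩
    exact ⟨a + b, finite_image_add_union hact ha hb⟩
  · intro x _
    obtain ⟨a, U, hU, ha⟩ := hloc x
    exact ⟨U, nhdsWithin_le_nhds hU, a, ha⟩

theorem finite_of_finite_range [TopologicalSpace X] [T1Space X]
    (hact : ∀ s t, φ s ∘ φ t = φ (s + t)) (hmin : ∀ x : X, Dense (range fun s => φ s x))
    {a : S} (ha : (range (φ a)).Finite) : Finite X := by
  cases isEmpty_or_nonempty X with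
  | inl _ => infer_instance
  | inr hX =>
    obtain ⟨v⟩ := hX
    have horbit : (range fun s => φ s (φ a v)) ⊆ range (φ a) := by
      rintro _ ⟨t, rfl⟩
      refine ⟨φ t v, ?_⟩
      rw [← Function.comp_apply (f := φ a), hact, add_comm, ← hact, Function.comp_apply]
    have hdense : Dense (range (φ a)) := (hmin (φ a v)).mono horbit
    rw [← finite_univ_iff, ← hdense.closure_eq, ha.isClosed.closure_eq]
    exact ha

end SemigroupAction

theorem finite_of_singleton_image {S X : Type*} [AddCommSemigroup S] [TopologicalSpace X]
    [CompactSpace X] [T2Space X]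
    (φ : S → X → X) (hcont : ∀ s, Continuous (φ s))
    (hact : ∀ s t, φ s ∘ φ t = φ (s + t))
    (hmin : ∀ x : X, Dense (Set.range fun s => φ s x))
    (V : Set X) (hV : V.Nonempty) (hVo : IsOpen V)
    (s : S) (x₀ : X) (himg : φ s '' V = {x₀}) :
    Finite X := by
  have : Nonempty S := ⟨s⟩
  have hloc : ∀ x, ∃ a, ∃ U ∈ 𝓝 x, (φ a '' U).Finite := by
    intro x
    obtain ⟨_, ⟨t, rfl⟩, ht⟩ := (hmin x).exists_mem_open hVo hV
    refine ⟨s + t, φ t ⁻¹' V, (hVo.preimage (hcont t)).mem_nhds ht, ?_⟩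
    have hcollapse : φ (s + t) '' (φ t ⁻¹' V) ⊆ {x₀} := by
      rw [← hact, image_comp, ← himg]
      exact image_mono (image_preimage_subset _ _)
    exact (finite_singleton x₀).subset hcollapse
  obtain ⟨a, ha⟩ := exists_finite_range_of_locally_finite_image hact hloc
  exact finite_of_finite_range hact hmin ha
end

section
/- Let X be a Hausdorff space with a free arc identified with [0,1] and f : X → X continuous without periodic points in [0,1]. Assume 0 < f(0) = c = f(1) < 1. Then the entire forward orbit {f^n(c) : n ≥ 0} is contained in (0,1). -/
/-!
Induction on the orbit. Suppose `f^m(c) = y ∈ (0,1)` but `g := f^(m+1)` sends `c` off `(0,1)`; then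
`g 0 = g 1 = y`. Points of the closure of the open arc that are not in it are endpoints, so the first
exit `σ₁` of `g` from `(0,1)` on `[0,c]` and its last exit `σ₂` on `[c,1]` land on endpoints, and
`g σ₁ = 1`, `g σ₂ = 0`: otherwise `g`, read in arc coordinates, would cross the diagonal and give a
periodic point. Now `f ∘ g` sends `σ₁, σ₂` back to `c`. If it keeps `[σ₁,σ₂]` in the arc it crosses
the diagonal there; otherwise the same exit argument yields `τ₁ ≤ τ₂` in `(σ₁,σ₂)` with
`f (g τ₁) = 1`, `f (g τ₂) = 0`. Then, according as `y ≤ τ₂` or not, `[0,σ₁]` and `[τ₂,σ₂]` (under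
`g` and `f ∘ g`), or `[σ₁,τ₁]` and `[σ₂,1]` (under `f ∘ g` and `g`), cover each other, and the
composite has a fixed point, again a periodic point.
-/

open Set Function Topology

section Exit

variable {α X : Type*} [ConditionallyCompleteLinearOrder α] [TopologicalSpace α] [OrderTopology α]
  [DenselyOrdered α] [TopologicalSpace X] {g : α → X} {U : Set X} {a b : α}

theorem exists_first_exit (hg : Continuous g) (hU : IsOpen U) (hab : a ≤ b) (ha : g a ∈ U)
    (hb : g b ∉ U) : ∃ s, a < s ∧ s ≤ b ∧ MapsTo g (Icc a s) (closure U) ∧ g s ∉ U := by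
  obtain ⟨s, ⟨⟨has, hsb⟩, hs⟩, hmin⟩ :=
    (isCompact_Icc.inter_right (hU.isClosed_compl.preimage hg)).exists_isLeast
      ⟨b, ⟨hab, le_rfl⟩, hb⟩
  have has : a < s := has.lt_of_ne (by rintro rfl; exact hs ha)
  have hIco : MapsTo g (Ico a s) U := fun t ht => by
    by_contra h
    exact (hmin ⟨⟨ht.1, ht.2.le.trans hsb⟩, h⟩).not_gt ht.2
  refine ⟨s, has, hsb, ?_, hs⟩
  simpa only [closure_Ico has.ne] using hIco.closure hg

theorem exists_last_exit (hg : Continuous g) (hU : IsOpen U) (hab : a ≤ b) (ha : g a ∉ U)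
    (hb : g b ∈ U) : ∃ s, a ≤ s ∧ s < b ∧ MapsTo g (Icc s b) (closure U) ∧ g s ∉ U := by
  obtain ⟨s, hbs, hsa, hmaps, hs⟩ :=
    exists_first_exit (α := αᵒᵈ) (g := g ∘ OrderDual.ofDual) (hg.comp continuous_ofDual) hU
      (a := OrderDual.toDual b) (b := OrderDual.toDual a) hab hb ha
  exact ⟨OrderDual.ofDual s, hsa, hbs, fun t ht => hmaps (x := OrderDual.toDual t) ⟨ht.2, ht.1⟩, hs⟩

end Exit

section Covering

variable {φ ψ : ℝ → ℝ} {a b a' b' : ℝ}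

theorem exists_Icc_subset_mapsTo_Icc (hφ : ContinuousOn φ (Icc a b)) (hab : a ≤ b)
    (hab' : a' ≤ b') (ha : φ a ≤ a') (hb : b' ≤ φ b) :
    ∃ u v, a ≤ u ∧ u ≤ v ∧ v ≤ b ∧ φ u = a' ∧ φ v = b' ∧ MapsTo φ (Icc u v) (Icc a' b') := by
  obtain ⟨v, ⟨⟨hav, hvb⟩, hv⟩, hvmin⟩ :=
    (isCompact_Icc.of_isClosed_subset
      (hφ.preimage_isClosed_of_isClosed isClosed_Icc isClosed_singleton)
      inter_subset_left).exists_isLeast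
      (intermediate_value_Icc hab hφ ⟨ha.trans hab', hb⟩)
  have hφv : ContinuousOn φ (Icc a v) := hφ.mono (Icc_subset_Icc_right hvb)
  obtain ⟨u, ⟨⟨hau, huv⟩, hu⟩, humax⟩ :=
    (isCompact_Icc.of_isClosed_subset
      (hφv.preimage_isClosed_of_isClosed isClosed_Icc isClosed_singleton)
      inter_subset_left).exists_isGreatest
      (intermediate_value_Icc hav hφv ⟨ha, hab'.trans_eq hv.symm⟩)
  refine ⟨u, v, hau, huv, hvb, hu, hv, fun t ⟨hut, htv⟩ => ⟨?_, ?_⟩⟩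
  · by_contra! hlt
    obtain ⟨s, ⟨hts, hsv⟩, hs⟩ := intermediate_value_Icc htv
      (hφ.mono (Icc_subset_Icc (hau.trans hut) hvb)) ⟨hlt.le, hab'.trans_eq hv.symm⟩
    have hsu := humax ⟨⟨hau.trans (hut.trans hts), hsv⟩, hs⟩
    exact hlt.ne (by rwa [le_antisymm hts (hsu.trans hut)])
  · by_contra! hgt
    obtain ⟨s, ⟨hus, hst⟩, hs⟩ := intermediate_value_Icc hut
      (hφ.mono (Icc_subset_Icc hau (htv.trans hvb))) ⟨hu.trans_le hab', hgt.le⟩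
    have hvs := hvmin ⟨⟨hau.trans hus, hst.trans (htv.trans hvb)⟩, hs⟩
    exact hgt.ne' (by rwa [← le_antisymm hst (htv.trans hvs)])

theorem exists_isFixedPt_comp_of_covers (hφ : ContinuousOn φ (Icc a b))
    (hψ : ContinuousOn ψ (Icc a' b')) (hab : a ≤ b) (hab' : a' ≤ b') (ha : φ a ≤ a')
    (hb : b' ≤ φ b) (ha' : ψ a' ≤ a) (hb' : b ≤ ψ b') :
    ∃ p ∈ Icc a b, φ p ∈ Icc a' b' ∧ ψ (φ p) = p := by
  obtain ⟨u, v, hau, huv, hvb, hu, hv, hmaps⟩ :=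
    exists_Icc_subset_mapsTo_Icc hφ hab hab' ha hb
  obtain ⟨p, hp, hfix⟩ := isPreconnected_Icc.intermediate_value₂ (left_mem_Icc.2 huv)
    (right_mem_Icc.2 huv) (hψ.comp (hφ.mono (Icc_subset_Icc hau hvb)) hmaps) continuousOn_id
    (by simpa [hu] using ha'.trans hau) (by simpa [hv] using hvb.trans hb')
  exact ⟨p, ⟨hau.trans hp.1, hp.2.trans hvb⟩, hmaps hp, hfix⟩

end Covering

section FreeArc

variable {X : Type*} {e : Icc (0:ℝ) 1 → X} {f : X → X} {k : ℕ} {a b : ℝ}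

-- The coordinate of a point of the arc; its value off `range e` is junk.
noncomputable def arcCoord (e : Icc (0:ℝ) 1 → X) (x : X) : ℝ := ((invFun e x : Icc (0:ℝ) 1) : ℝ)

noncomputable def arcIter (e : Icc (0:ℝ) 1 → X) (f : X → X) (k : ℕ) (t : ℝ) : X :=
  f^[k] (e (projIcc 0 1 zero_le_one t))

def arcInterior (e : Icc (0:ℝ) 1 → X) : Set X := e '' {t | (t : ℝ) ∈ Ioo (0:ℝ) 1}

theorem arcCoord_apply (he : Injective e) (u : Icc (0:ℝ) 1) : arcCoord e (e u) = u := by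
  rw [arcCoord, leftInverse_invFun he u]

theorem apply_projIcc_arcCoord {x : X} (hx : x ∈ range e) :
    e (projIcc 0 1 zero_le_one (arcCoord e x)) = x := by
  rw [arcCoord, projIcc_val, invFun_eq hx]

theorem arcIter_coe (u : Icc (0:ℝ) 1) : arcIter e f k u = f^[k] (e u) := by
  rw [arcIter, projIcc_val]

theorem arcIter_succ (t : ℝ) : arcIter e f (k + 1) t = f (arcIter e f k t) :=
  iterate_succ_apply' ..

theorem arcIter_add {k' : ℕ} {t : ℝ} (ht : arcIter e f k t ∈ range e) :
    arcIter e f (k' + k) t = arcIter e f k' (arcCoord e (arcIter e f k t)) :=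
  (iterate_add_apply ..).trans (congrArg f^[k'] (apply_projIcc_arcCoord ht).symm)

theorem isPeriodicPt_of_arcCoord_eq {t : ℝ} (ht : arcIter e f k t ∈ range e)
    (hfix : arcCoord e (arcIter e f k t) = t) :
    IsPeriodicPt f k (e (projIcc 0 1 zero_le_one t)) := by
  have h := apply_projIcc_arcCoord ht
  rw [hfix] at h
  exact h.symm

variable [TopologicalSpace X]

theorem continuousOn_arcCoord (he : IsEmbedding e) : ContinuousOn (arcCoord e) (range e) :=
  continuous_subtype_val.comp_continuousOn <| he.continuousOn_iff.2 <|
    continuousOn_id.congr fun _ hx => invFun_eq hx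

theorem continuous_arcIter (he : Continuous e) (hf : Continuous f) (k : ℕ) :
    Continuous (arcIter e f k) :=
  (hf.iterate k).comp (he.comp continuous_projIcc)

theorem continuousOn_arcCoord_arcIter (he : IsEmbedding e) (hf : Continuous f) {s : Set ℝ}
    (hs : MapsTo (arcIter e f k) s (range e)) :
    ContinuousOn (fun t => arcCoord e (arcIter e f k t)) s :=
  (continuousOn_arcCoord he).comp (continuous_arcIter he.continuous hf k).continuousOn hs

theorem closure_arcInterior_subset [T2Space X] (he : Continuous e) :
    closure (arcInterior e) ⊆ range e :=
  closure_minimal (image_subset_range _ _) (isCompact_range he).isClosed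

theorem eq_endpoint_of_mem_closure_arcInterior [T2Space X] (he : Continuous e) {x : X}
    (hx : x ∈ closure (arcInterior e)) (hxU : x ∉ arcInterior e) :
    x = e ⟨0, by norm_num⟩ ∨ x = e ⟨1, by norm_num⟩ := by
  obtain ⟨w, rfl⟩ := closure_arcInterior_subset he hx
  have hw : (w : ℝ) = 0 ∨ (w : ℝ) = 1 := by
    by_contra! h
    exact hxU ⟨w, ⟨w.2.1.lt_of_ne' h.1, w.2.2.lt_of_ne h.2⟩, rfl⟩
  rcases hw with h | h
  · exact .inl (congrArg e (Subtype.ext h))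
  · exact .inr (congrArg e (Subtype.ext h))

theorem exists_isPeriodicPt_of_crossing (he : IsEmbedding e) (hf : Continuous f) (hab : a ≤ b)
    (hmaps : MapsTo (arcIter e f k) (Icc a b) (range e))
    (ha : a ≤ arcCoord e (arcIter e f k a)) (hb : arcCoord e (arcIter e f k b) ≤ b) :
    ∃ x, IsPeriodicPt f k (e x) := by
  obtain ⟨p, hp, hfix⟩ :=
    exists_mem_Icc_isFixedPt (continuousOn_arcCoord_arcIter he hf hmaps) hab ha hb
  exact ⟨_, isPeriodicPt_of_arcCoord_eq (hmaps hp) hfix⟩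

theorem exists_isPeriodicPt_of_covers (he : IsEmbedding e) (hf : Continuous f) {k' : ℕ}
    {a' b' : ℝ} (hab : a ≤ b) (hab' : a' ≤ b')
    (hmaps : MapsTo (arcIter e f k) (Icc a b) (range e))
    (hmaps' : MapsTo (arcIter e f k') (Icc a' b') (range e))
    (ha : arcCoord e (arcIter e f k a) ≤ a') (hb : b' ≤ arcCoord e (arcIter e f k b))
    (ha' : arcCoord e (arcIter e f k' a') ≤ a) (hb' : b ≤ arcCoord e (arcIter e f k' b')) :
    ∃ x, IsPeriodicPt f (k' + k) (e x) := by
  obtain ⟨p, hp, hφp, hfix⟩ := exists_isFixedPt_comp_of_covers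
    (continuousOn_arcCoord_arcIter he hf hmaps) (continuousOn_arcCoord_arcIter he hf hmaps')
    hab hab' ha hb ha' hb'
  rw [← arcIter_add (hmaps hp)] at hfix
  exact ⟨_, isPeriodicPt_of_arcCoord_eq (arcIter_add (hmaps hp) ▸ hmaps' hφp) hfix⟩

theorem exists_first_exit_eq_one [T2Space X] (he : IsEmbedding e) (hf : Continuous f)
    (hU : IsOpen (arcInterior e)) (hper : ∀ x, ¬IsPeriodicPt f k (e x)) (ha₀ : 0 ≤ a)
    (hab : a ≤ b) (ha : arcIter e f k a ∈ arcInterior e) (hb : arcIter e f k b ∉ arcInterior e)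
    (hcoord : a ≤ arcCoord e (arcIter e f k a)) :
    ∃ s, a < s ∧ s ≤ b ∧ MapsTo (arcIter e f k) (Icc a s) (range e) ∧
      arcIter e f k s = e ⟨1, by norm_num⟩ := by
  obtain ⟨s, has, hsb, hmaps, hs⟩ :=
    exists_first_exit (continuous_arcIter he.continuous hf k) hU hab ha hb
  have hmaps' := hmaps.mono_right (closure_arcInterior_subset he.continuous)
  refine ⟨s, has, hsb, hmaps', ?_⟩
  refine (eq_endpoint_of_mem_closure_arcInterior he.continuous
    (hmaps ⟨has.le, le_rfl⟩) hs).resolve_left fun h0 => ?_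
  obtain ⟨x, hx⟩ := exists_isPeriodicPt_of_crossing he hf has.le hmaps' hcoord
    (by rw [h0, arcCoord_apply he.injective]; exact ha₀.trans has.le)
  exact hper x hx

theorem exists_last_exit_eq_zero [T2Space X] (he : IsEmbedding e) (hf : Continuous f)
    (hU : IsOpen (arcInterior e)) (hper : ∀ x, ¬IsPeriodicPt f k (e x)) (hb₁ : b ≤ 1)
    (hab : a ≤ b) (ha : arcIter e f k a ∉ arcInterior e) (hb : arcIter e f k b ∈ arcInterior e)
    (hcoord : arcCoord e (arcIter e f k b) ≤ b) :
    ∃ s, a ≤ s ∧ s < b ∧ MapsTo (arcIter e f k) (Icc s b) (range e) ∧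
      arcIter e f k s = e ⟨0, by norm_num⟩ := by
  obtain ⟨s, has, hsb, hmaps, hs⟩ :=
    exists_last_exit (continuous_arcIter he.continuous hf k) hU hab ha hb
  have hmaps' := hmaps.mono_right (closure_arcInterior_subset he.continuous)
  refine ⟨s, has, hsb, hmaps', ?_⟩
  refine (eq_endpoint_of_mem_closure_arcInterior he.continuous
    (hmaps ⟨le_rfl, hsb.le⟩) hs).resolve_right fun h1 => ?_
  obtain ⟨x, hx⟩ := exists_isPeriodicPt_of_crossing he hf hsb.le hmaps'
    (by rw [h1, arcCoord_apply he.injective]; exact hsb.le.trans hb₁) hcoord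
  exact hper x hx

theorem exists_exits_through_endpoints [T2Space X] (he : IsEmbedding e) (hf : Continuous f)
    (hU : IsOpen (arcInterior e)) (hper : ∀ x, ¬IsPeriodicPt f k (e x)) {t : ℝ} (ha₀ : 0 ≤ a)
    (hb₁ : b ≤ 1) (hat : a ≤ t) (htb : t ≤ b) (ha : arcIter e f k a ∈ arcInterior e)
    (hb : arcIter e f k b ∈ arcInterior e) (ht : arcIter e f k t ∉ arcInterior e)
    (hcoa : a ≤ arcCoord e (arcIter e f k a)) (hcob : arcCoord e (arcIter e f k b) ≤ b) :
    ∃ s₁ s₂, a < s₁ ∧ s₁ ≤ t ∧ t ≤ s₂ ∧ s₂ < b ∧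
      MapsTo (arcIter e f k) (Icc a s₁) (range e) ∧ arcIter e f k s₁ = e ⟨1, by norm_num⟩ ∧
      MapsTo (arcIter e f k) (Icc s₂ b) (range e) ∧ arcIter e f k s₂ = e ⟨0, by norm_num⟩ := by
  obtain ⟨s₁, has₁, hs₁t, hmaps₁, hs₁⟩ :=
    exists_first_exit_eq_one he hf hU hper ha₀ hat ha ht hcoa
  obtain ⟨s₂, hts₂, hs₂b, hmaps₂, hs₂⟩ :=
    exists_last_exit_eq_zero he hf hU hper hb₁ htb ht hb hcob
  exact ⟨s₁, s₂, has₁, hs₁t, hts₂, hs₂b, hmaps₁, hs₁, hmaps₂, hs₂⟩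

theorem iterate_succ_mem_arcInterior [T2Space X] {c : Icc (0:ℝ) 1} (he : IsEmbedding e)
    (hf : Continuous f) (hU : IsOpen (arcInterior e))
    (hper : ∀ x k, 1 ≤ k → ¬IsPeriodicPt f k (e x)) (hc : (c : ℝ) ∈ Ioo (0:ℝ) 1)
    (h0 : f (e ⟨0, by norm_num⟩) = e c) (h1 : f (e ⟨1, by norm_num⟩) = e c) {m : ℕ}
    (hm : f^[m] (e c) ∈ arcInterior e) : f^[m + 1] (e c) ∈ arcInterior e := by
  by_contra hout
  obtain ⟨y, hy, hye⟩ := hm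
  have hco := arcCoord_apply he.injective
  have hP₀ : arcIter e f (m + 1) 0 = e y := by
    rw [arcIter, projIcc_left, iterate_succ_apply, h0, hye]
  have hP₁ : arcIter e f (m + 1) 1 = e y := by
    rw [arcIter, projIcc_right, iterate_succ_apply, h1, hye]
  have hyU : e y ∈ arcInterior e := ⟨y, hy, rfl⟩
  have hcU : e c ∈ arcInterior e := ⟨c, hc, rfl⟩
  obtain ⟨σ₁, σ₂, hσ₁, hσ₁c, hcσ₂, hσ₂, hmaps₁, hσ₁e, hmaps₂, hσ₂e⟩ :=
    exists_exits_through_endpoints he hf hU (fun x => hper x _ (Nat.le_add_left 1 m)) le_rfl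
      le_rfl hc.1.le hc.2.le (hP₀ ▸ hyU) (hP₁ ▸ hyU) (by rwa [arcIter_coe])
      (by rw [hP₀, hco]; exact hy.1.le) (by rw [hP₁, hco]; exact hy.2.le)
  have hQ₁ : arcIter e f (m + 2) σ₁ = e c := by rw [arcIter_succ, hσ₁e, h1]
  have hQ₂ : arcIter e f (m + 2) σ₂ = e c := by rw [arcIter_succ, hσ₂e, h0]
  by_cases hexit : ∃ t ∈ Icc σ₁ σ₂, arcIter e f (m + 2) t ∉ arcInterior e
  · obtain ⟨t, ⟨hσ₁t, htσ₂⟩, ht⟩ := hexit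
    obtain ⟨τ₁, τ₂, hτ₁, hτ₁t, htτ₂, hτ₂, hmaps₃, hτ₁e, hmaps₄, hτ₂e⟩ :=
      exists_exits_through_endpoints he hf hU (fun x => hper x _ (Nat.le_add_left 1 _)) hσ₁.le
        hσ₂.le hσ₁t htσ₂ (hQ₁ ▸ hcU) (hQ₂ ▸ hcU) ht (by rw [hQ₁, hco]; exact hσ₁c)
        (by rw [hQ₂, hco]; exact hcσ₂)
    rcases le_or_gt (y : ℝ) τ₂ with hyτ | hτy
    · obtain ⟨x, hx⟩ := exists_isPeriodicPt_of_covers he hf hσ₁.le hτ₂.le hmaps₁ hmaps₄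
        (by rw [hP₀, hco]; exact hyτ) (by rw [hσ₁e, hco]; exact hσ₂.le)
        (by rw [hτ₂e, hco]) (by rw [hQ₂, hco]; exact hσ₁c)
      exact hper x _ (Nat.le_add_left 1 _) hx
    · obtain ⟨x, hx⟩ := exists_isPeriodicPt_of_covers he hf hτ₁.le hσ₂.le hmaps₃ hmaps₂
        (by rw [hQ₁, hco]; exact hcσ₂) (by rw [hτ₁e, hco])
        (by rw [hσ₂e, hco]; exact hσ₁.le) (by rw [hP₁, hco]; linarith)
      exact hper x _ (Nat.le_add_left 1 _) hx
  · push Not at hexit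
    obtain ⟨x, hx⟩ := exists_isPeriodicPt_of_crossing he hf (hσ₁c.trans hcσ₂)
      (fun t ht => image_subset_range _ _ (hexit t ht)) (by rw [hQ₁, hco]; exact hσ₁c)
      (by rw [hQ₂, hco]; exact hcσ₂)
    exact hper x _ (Nat.le_add_left 1 _) hx

end FreeArc

theorem orbit_in_interior {X : Type*} [TopologicalSpace X] [T2Space X]
    (e : Set.Icc (0:ℝ) 1 → X) (he : Topology.IsEmbedding e)
    (hopen : IsOpen (e '' {t : Set.Icc (0:ℝ) 1 | (t : ℝ) ∈ Set.Ioo (0:ℝ) 1}))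
    (f : X → X) (hf : Continuous f)
    (hper : ∀ (x : Set.Icc (0:ℝ) 1) (k : ℕ), 1 ≤ k → f^[k] (e x) ≠ e x)
    (c : Set.Icc (0:ℝ) 1) (hc : (c : ℝ) ∈ Set.Ioo (0:ℝ) 1)
    (h0 : f (e ⟨0, by norm_num⟩) = e c) (h1 : f (e ⟨1, by norm_num⟩) = e c) :
    ∀ n : ℕ, ∃ y : Set.Icc (0:ℝ) 1, f^[n] (e c) = e y ∧ (y : ℝ) ∈ Set.Ioo (0:ℝ) 1 := by
  have horbit : ∀ n, f^[n] (e c) ∈ arcInterior e := by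
    intro n
    induction n with
    | zero => exact ⟨c, hc, rfl⟩
    | succ m ih => exact iterate_succ_mem_arcInterior he hf hopen hper hc h0 h1 ih
  intro n
  obtain ⟨y, hy, hye⟩ := horbit n
  exact ⟨y, hye.symm, hy⟩
end

section
/- Let X be a Hausdorff space that is a union of finitely many arcs (subsets homeomorphic to [0,1]). Then the union of all free intervals of X is dense in X. -/
/-- A free interval in a space: an open subset homeomorphic to the open interval `(0,1)`. -/
def IsFreeInterval {X : Type*} [TopologicalSpace X] (J : Set X) : Prop :=
  IsOpen J ∧ Nonempty (J ≃ₜ Set.Ioo (0:ℝ) 1)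

/-- An arc: a subset homeomorphic to `[0,1]`. -/
def IsArc {X : Type*} [TopologicalSpace X] (A : Set X) : Prop :=
  Nonempty (A ≃ₜ Set.Icc (0:ℝ) 1)

/-!
By Baire's theorem the interiors of the finitely many arcs (compact, hence closed) are dense,
so every nonempty open set `U` meets the interior of some arc `A ≅ [0,1]` in a nonempty open
set. Pulled back to `[0,1]`, that set contains a small open interval `(a,b) ⊆ (0,1)`, whose image
is open in `A`, lies inside the interior of `A`, and is therefore open in `X`: a free interval
inside `U`.
-/

open Set Topology

noncomputable def homeomorphIooUnitIoo {a b : ℝ} (hab : a < b) : Ioo a b ≃ₜ Ioo (0:ℝ) 1 :=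
  (Homeomorph.setCongr <| by
      rw [affineHomeomorph_image_Ioo _ _ _ _ (sub_pos.mpr hab), mul_zero, mul_one, zero_add,
        sub_add_cancel]).trans
    ((affineHomeomorph (b - a) a (sub_pos.mpr hab).ne').image (Ioo 0 1)).symm

theorem exists_isFreeInterval_subset_of_isOpen_Icc {W : Set (Icc (0:ℝ) 1)} (hW : IsOpen W)
    (hne : W.Nonempty) : ∃ J ⊆ W, J.Nonempty ∧ IsFreeInterval J := by
  obtain ⟨O, hO, rfl⟩ := isOpen_induced_iff.mp hW
  obtain ⟨t, ht⟩ := hne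
  have hmeet : (O ∩ Ioo 0 1).Nonempty := by
    have ht_cl : (t : ℝ) ∈ closure (Ioo (0:ℝ) 1) := by
      rw [closure_Ioo zero_ne_one]; exact t.2
    simpa [inter_comm] using mem_closure_iff.mp ht_cl O hO ht
  obtain ⟨a, b, hab, hsub⟩ := (hO.inter isOpen_Ioo).exists_Ioo_subset hmeet
  have hIcc : Ioo a b ⊆ range ((↑) : Icc (0:ℝ) 1 → ℝ) := by
    rw [Subtype.range_coe]; exact fun x hx => Ioo_subset_Icc_self (hsub hx).2
  obtain ⟨c, hc⟩ := nonempty_Ioo.mpr hab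
  obtain ⟨s, rfl⟩ := hIcc hc
  refine ⟨Subtype.val ⁻¹' Ioo a b, fun x hx => (hsub hx).1, ⟨s, hc⟩,
    isOpen_Ioo.preimage continuous_subtype_val, ?_⟩
  exact ⟨(IsEmbedding.subtypeVal.homeomorphOfSubsetRange hIcc).trans (homeomorphIooUnitIoo hab)⟩

section

variable {X Y : Type*} [TopologicalSpace X] [TopologicalSpace Y]

theorem IsFreeInterval.preimage_homeomorph {J : Set Y} (hJ : IsFreeInterval J) (e : X ≃ₜ Y) :
    IsFreeInterval (e ⁻¹' J) :=
  ⟨hJ.1.preimage e.continuous,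
    hJ.2.map fun h => (e.isEmbedding.homeomorphOfSubsetRange (by simp)).trans h⟩

theorem IsFreeInterval.image_val {A : Set X} {J : Set A} (hJ : IsFreeInterval J)
    (hJA : J ⊆ (↑) ⁻¹' interior A) : IsFreeInterval ((↑) '' J : Set X) := by
  obtain ⟨W, hW, rfl⟩ := isOpen_induced_iff.mp hJ.1
  have hJW : (↑) '' ((↑) ⁻¹' W : Set A) = W ∩ interior A := by
    rw [image_preimage_eq_inter_range, Subtype.range_coe]
    refine subset_antisymm (fun x hx => ⟨hx.1, ?_⟩) (inter_subset_inter_right _ interior_subset)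
    simpa using hJA (a := ⟨x, hx.2⟩) hx.1
  exact ⟨hJW ▸ hW.inter isOpen_interior,
    hJ.2.map fun h => (IsEmbedding.subtypeVal.homeomorphImage _).symm.trans h⟩

theorem IsArc.isCompact {A : Set X} (hA : IsArc A) : IsCompact A :=
  let ⟨e⟩ := hA
  isCompact_iff_compactSpace.mpr e.symm.compactSpace

theorem IsArc.exists_isFreeInterval_subset {A U : Set X} (hA : IsArc A) (hU : IsOpen U)
    (hne : (U ∩ interior A).Nonempty) : ∃ J ⊆ U, J.Nonempty ∧ IsFreeInterval J := by
  obtain ⟨e⟩ := hA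
  obtain ⟨x, hx⟩ := hne
  set W : Set A := (↑) ⁻¹' (U ∩ interior A)
  have hW : IsOpen (e.symm ⁻¹' W) :=
    ((hU.inter isOpen_interior).preimage continuous_subtype_val).preimage e.symm.continuous
  obtain ⟨J, hJW, ⟨t, ht⟩, hJ⟩ := exists_isFreeInterval_subset_of_isOpen_Icc hW
    ⟨e ⟨x, interior_subset hx.2⟩, by simpa [W] using hx⟩
  have hJA : e ⁻¹' J ⊆ W := fun y hy => by simpa using hJW hy
  refine ⟨(↑) '' (e ⁻¹' J), ?_, ⟨e.symm t, by simpa using ht⟩,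
    (hJ.preimage_homeomorph e).image_val fun y hy => (hJA hy).2⟩
  rintro _ ⟨y, hy, rfl⟩
  exact (hJA hy).1

end

theorem dense_free_intervals_of_finite_union_of_arcs {X : Type*} [TopologicalSpace X]
    [T2Space X] (n : ℕ) (A : Fin n → Set X) (hA : ∀ i, IsArc (A i))
    (hcov : (⋃ i, A i) = Set.univ) :
    Dense (⋃₀ {J : Set X | IsFreeInterval J}) := by
  have hclosed : ∀ i, IsClosed (A i) := fun i => (hA i).isCompact.isClosed
  -- compact Hausdorff, hence a Baire space
  have : CompactSpace X := ⟨hcov ▸ isCompact_iUnion fun i => (hA i).isCompact⟩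
  have hint : Dense (⋃ i, interior (A i)) := dense_iUnion_interior_of_closed hclosed hcov
  refine dense_iff_inter_open.mpr fun U hU hUne => ?_
  obtain ⟨x, hxU, hx⟩ := dense_iff_inter_open.mp hint U hU hUne
  obtain ⟨i, hxi⟩ := mem_iUnion.mp hx
  obtain ⟨J, hJU, ⟨y, hy⟩, hJ⟩ := (hA i).exists_isFreeInterval_subset hU ⟨x, hxU, hxi⟩
  exact ⟨y, hJU hy, J, hJ, hy⟩
end

section
/- Let X = Y ∪ Z be a Hausdorff space, where Y and Z are closed subspaces of X, each of which has a dense union of free intervals in its relative topology. Then the union of the free intervals of X is dense in X. -/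
/-!
The union of the free intervals is dense iff every nonempty open set contains a free interval,
since an open set meeting a free interval contains a smaller one. A nonempty open `U ⊆ X` either
lies in `Z`, or `U \ Z` is a nonempty open set of `X` inside `Y`; a free interval of `Y` inside
such a set is open in `X`, hence a free interval of `X`.
-/

open Set Topology

theorem nonempty_Ioo_homeomorph_Ioo_zero_one {a b : ℝ} (hab : a < b) :
    Nonempty (Ioo a b ≃ₜ Ioo (0:ℝ) 1) := by
  have hpos : 0 < b - a := sub_pos.2 hab
  have himage : affineHomeomorph (b - a) a hpos.ne' '' Ioo 0 1 = Ioo a b := by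
    rw [affineHomeomorph_image_Ioo _ _ _ _ hpos]
    ring_nf
  exact ⟨(((affineHomeomorph _ _ hpos.ne').image (Ioo 0 1)).trans (.setCongr himage)).symm⟩

section

variable {X : Type*} [TopologicalSpace X]

theorem exists_isFreeInterval_subset_of_isOpenEmbedding {J U : Set X} (hJ : IsOpen J)
    {φ : J → ℝ} (hφ : IsOpenEmbedding φ) (hU : IsOpen U) (hJU : (J ∩ U).Nonempty) :
    ∃ K, IsFreeInterval K ∧ K.Nonempty ∧ K ⊆ U := by
  obtain ⟨x, hxJ, hxU⟩ := hJU
  have hV : IsOpen (φ '' (Subtype.val ⁻¹' U)) :=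
    hφ.isOpenMap _ (hU.preimage continuous_subtype_val)
  obtain ⟨a, b, hab, hab_sub⟩ := hV.exists_Ioo_subset ⟨φ ⟨x, hxJ⟩, mem_image_of_mem φ hxU⟩
  have hpre_sub : φ ⁻¹' Ioo a b ⊆ Subtype.val ⁻¹' U := by
    simpa only [hφ.injective.preimage_image] using preimage_mono (f := φ) hab_sub
  have hhomeo : φ ⁻¹' Ioo a b ≃ₜ Ioo a b :=
    hφ.isEmbedding.homeomorphOfSubsetRange (hab_sub.trans (image_subset_range _ _))
  obtain ⟨t, ht⟩ := nonempty_Ioo.2 hab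
  obtain ⟨y, -, hy⟩ := hab_sub ht
  refine ⟨Subtype.val '' (φ ⁻¹' Ioo a b), ⟨?_, ?_⟩, ⟨y, y, by simpa [hy] using ht, rfl⟩,
    image_subset_iff.2 hpre_sub⟩
  · exact hJ.isOpenMap_subtype_val _ (isOpen_Ioo.preimage hφ.continuous)
  · obtain ⟨e⟩ := nonempty_Ioo_homeomorph_Ioo_zero_one hab
    exact ⟨(IsEmbedding.subtypeVal.homeomorphImage _).symm.trans (hhomeo.trans e)⟩

theorem dense_sUnion_isFreeInterval_iff :
    Dense (⋃₀ {J : Set X | IsFreeInterval J}) ↔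
      ∀ U : Set X, IsOpen U → U.Nonempty → ∃ J, IsFreeInterval J ∧ J.Nonempty ∧ J ⊆ U := by
  rw [dense_iff_inter_open]
  refine forall₃_congr fun U hU _ => ⟨?_, ?_⟩
  · rintro ⟨x, hxU, J, ⟨hJ, ⟨e⟩⟩, hxJ⟩
    exact exists_isFreeInterval_subset_of_isOpenEmbedding hJ
      (isOpen_Ioo.isOpenEmbedding_subtypeVal.comp e.isOpenEmbedding) hU ⟨x, hxJ, hxU⟩
  · rintro ⟨J, hJ, ⟨x, hxJ⟩, hJU⟩
    exact ⟨x, hJU hxJ, J, hJ, hxJ⟩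

theorem IsFreeInterval.image_val_s14 {Y V : Set X} (hV : IsOpen V) (hVY : V ⊆ Y) {J : Set Y}
    (hJ : IsFreeInterval J) (hJV : J ⊆ Subtype.val ⁻¹' V) :
    IsFreeInterval (Subtype.val '' J) := by
  obtain ⟨⟨G, hG, hGJ⟩, ⟨e⟩⟩ := hJ
  have himage : Subtype.val '' J = V ∩ G := by
    ext x
    constructor
    · rintro ⟨y, hy, rfl⟩
      exact ⟨hJV hy, (hGJ ▸ hy : y ∈ Subtype.val ⁻¹' G)⟩
    · rintro ⟨hxV, hxG⟩
      exact ⟨⟨x, hVY hxV⟩, hGJ ▸ hxG, rfl⟩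
  exact ⟨himage ▸ hV.inter hG, ⟨(IsEmbedding.subtypeVal.homeomorphImage J).symm.trans e⟩⟩

theorem exists_isFreeInterval_subset_of_subset {Y V : Set X}
    (hd : Dense (⋃₀ {J : Set Y | IsFreeInterval J})) (hV : IsOpen V) (hne : V.Nonempty)
    (hVY : V ⊆ Y) : ∃ J : Set X, IsFreeInterval J ∧ J.Nonempty ∧ J ⊆ V := by
  obtain ⟨x, hx⟩ := hne
  obtain ⟨J, hJ, hJne, hJV⟩ := dense_sUnion_isFreeInterval_iff.1 hd (Subtype.val ⁻¹' V)
    (hV.preimage continuous_subtype_val) ⟨⟨x, hVY hx⟩, hx⟩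
  exact ⟨_, hJ.image_val_s14 hV hVY hJV, hJne.image _, image_subset_iff.2 hJV⟩

end

theorem dense_free_intervals_of_union_general {X : Type*} [TopologicalSpace X]
    (Y Z : Set X) (hZ : IsClosed Z) (hYZ : Y ∪ Z = Set.univ)
    (hdY : Dense (⋃₀ {J : Set Y | IsFreeInterval J}))
    (hdZ : Dense (⋃₀ {J : Set Z | IsFreeInterval J})) :
    Dense (⋃₀ {J : Set X | IsFreeInterval J}) := by
  refine dense_sUnion_isFreeInterval_iff.2 fun U hU hUne => ?_
  by_cases hUZ : U ⊆ Z
  · exact exists_isFreeInterval_subset_of_subset hdZ hU hUne hUZ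
  · have hUY : U \ Z ⊆ Y := fun x hx => (hYZ ▸ mem_univ x).resolve_right hx.2
    obtain ⟨J, hJ, hJne, hJU⟩ :=
      exists_isFreeInterval_subset_of_subset hdY (hU.sdiff hZ) (sdiff_nonempty.2 hUZ) hUY
    exact ⟨J, hJ, hJne, hJU.trans sdiff_subset⟩

theorem dense_free_intervals_of_union {X : Type*} [TopologicalSpace X] [T2Space X]
    (Y Z : Set X) (hY : IsClosed Y) (hZ : IsClosed Z) (hYZ : Y ∪ Z = Set.univ)
    (hdY : Dense (⋃₀ {J : Set Y | IsFreeInterval J}))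
    (hdZ : Dense (⋃₀ {J : Set Z | IsFreeInterval J})) :
    Dense (⋃₀ {J : Set X | IsFreeInterval J}) :=
  dense_free_intervals_of_union_general Y Z hZ hYZ hdY hdZ
end

section
/- Let X be a disjoint union of finitely many circles and S an abelian semigroup. Then S acts in a minimal way on X if and only if there is a semigroup morphism h : S → Homeo(X) such that the subgroup of Homeo(X) generated by h(S) has a minimal natural action on X. -/
/-- The group of homeomorphisms of a space, with `(f * g) x = f (g x)`. -/
instance Homeomorph.instGroupOfHomeomorph {X : Type*} [TopologicalSpace X] : Group (X ≃ₜ X) where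
  mul f g := g.trans f
  one := Homeomorph.refl X
  inv := Homeomorph.symm
  mul_assoc a b c := by ext x; rfl
  one_mul a := by ext x; rfl
  mul_one a := by ext x; rfl
  inv_mul_cancel a := by ext x; exact a.symm_apply_apply x

/-!
A map `φ s₀` of a minimal action is onto, its image being closed and invariant. It is also
one-to-one: if `φ s₀ a = φ s₀ b` with `a ≠ b`, the orbit of `φ s₀ a` meets both open arcs
between `a` and `b`, so some `G₁ = φ (t₁ + s₀)` and `G₂ = φ (t₂ + s₀)` collapse the arc
`[a, b]` to a point of the first, respectively the second, of these arcs. Comparing the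
winding numbers of the lifts of `G₁`, `G₂` along `[a, b]` produces a fixed point of `G₁` or
`G₂` or a coincidence point of `G₁` and `G₂`. Since the set where two maps commuting with the
action agree is closed and invariant, it is then everything, which is absurd.

Conversely, the closure `Y` of an `S`-orbit is forward invariant, so by compactness
`⋂ s, h s '' Y` is a nonempty closed set invariant under the generated group; it is therefore
everything, and so is `Y`.
-/

open Set Function

local notation "𝕋" => AddCircle (1 : ℝ)

theorem fst_apply_mk_eq {ι Y Z : Type*} [TopologicalSpace ι] [DiscreteTopology ι]
    [TopologicalSpace Y] [PreconnectedSpace Y] [TopologicalSpace Z] {ψ : ι × Y → ι × Z}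
    (hψ : Continuous ψ) (i : ι) (y y' : Y) : (ψ (i, y)).1 = (ψ (i, y')).1 :=
  ((IsLocallyConstant.iff_continuous _).2 (continuous_fst.comp (hψ.comp
    (Continuous.prodMk_right i)))).apply_eq_of_preconnectedSpace y y'

theorem fst_eq_of_fst_apply_eq {ι Y : Type*} [TopologicalSpace ι] [DiscreteTopology ι] [Finite ι]
    [TopologicalSpace Y] [PreconnectedSpace Y] {ψ : ι × Y → ι × Y} (hψ : Continuous ψ)
    (hsurj : Surjective ψ) {a b : ι × Y} (hab : (ψ a).1 = (ψ b).1) : a.1 = b.1 := by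
  let σ : ι → ι := fun i => (ψ (i, a.2)).1
  have hσ : Surjective σ := fun j => by
    obtain ⟨x, hx⟩ := hsurj (j, a.2)
    exact ⟨x.1, (fst_apply_mk_eq hψ x.1 a.2 x.2).trans (congrArg Prod.fst hx)⟩
  apply Finite.injective_iff_surjective.2 hσ
  calc σ a.1 = (ψ b).1 := hab
    _ = σ b.1 := fst_apply_mk_eq hψ b.1 b.2 a.2

theorem floor_eq_floor_of_forall_ne_intCast {X α : Type*} [TopologicalSpace X]
    [PreconnectedSpace X] [Ring α] [LinearOrder α] [IsStrictOrderedRing α] [FloorRing α]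
    [TopologicalSpace α] [OrderClosedTopology α] {f : X → α} (hf : Continuous f)
    (hZ : ∀ x (n : ℤ), f x ≠ n) (x y : X) : ⌊f x⌋ = ⌊f y⌋ := by
  suffices key : ∀ x y, ⌊f x⌋ ≤ ⌊f y⌋ from le_antisymm (key x y) (key y x)
  intro x y
  by_contra! hlt
  obtain ⟨z, hz⟩ := intermediate_value_univ y x hf ⟨(Int.floor_lt.1 hlt).le, Int.floor_le (f x)⟩
  exact hZ z _ hz

namespace AddCircle

theorem coe_eq_coe_iff_exists_int {x y : ℝ} : (x : 𝕋) = y ↔ ∃ n : ℤ, x - y = n := by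
  rw [← sub_eq_zero, ← AddCircle.coe_sub, AddCircle.coe_eq_zero_iff]
  simp [eq_comm]

theorem exists_real_lift {f : ℝ → 𝕋} (hf : Continuous f) {x₀ y₀ : ℝ} (h : (y₀ : 𝕋) = f x₀) :
    ∃ F : ℝ → ℝ, Continuous F ∧ F x₀ = y₀ ∧ ∀ x, (F x : 𝕋) = f x := by
  obtain ⟨F, ⟨hF₀, hF⟩, -⟩ :=
    (isCoveringMap_coe (1 : ℝ)).existsUnique_continuousMap_lifts ⟨f, hf⟩ x₀ y₀ h
  exact ⟨F, F.continuous, hF₀, congrFun hF⟩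

theorem exists_coe_eq_coe_eq_of_ne {θ θ' : 𝕋} (hne : θ ≠ θ') :
    ∃ α β : ℝ, (α : 𝕋) = θ ∧ (β : 𝕋) = θ' ∧ α < β ∧ β < α + 1 := by
  obtain ⟨α, rfl⟩ := QuotientAddGroup.mk_surjective θ
  obtain ⟨hαβ, hβα⟩ := (equivIco 1 α θ').2
  refine ⟨α, equivIco 1 α θ', rfl, coe_equivIco, hαβ.lt_of_ne fun h => hne ?_, hβα⟩
  rw [h, coe_equivIco]

instance : Nontrivial 𝕋 :=
  ⟨⟨((0 : ℝ) : 𝕋), ((1 / 2 : ℝ) : 𝕋), fun h => by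
    have := (coe_eq_coe_iff_of_mem_Ico (a := 0) ⟨le_rfl, by norm_num⟩
      ⟨by norm_num, by norm_num⟩).1 h
    norm_num at this⟩⟩

theorem exists_fixedPoint_or_coincidence_of_arc {g₁ g₂ : 𝕋 → 𝕋} (hg₁ : Continuous g₁)
    (hg₂ : Continuous g₂) {α β ζ₁ ζ₂ : ℝ} (hζ₁ : ζ₁ ∈ Ioo α β) (hζ₂ : ζ₂ ∈ Ioo β (α + 1))
    (h₁α : g₁ α = ζ₁) (h₁β : g₁ β = ζ₁) (h₂α : g₂ α = ζ₂) (h₂β : g₂ β = ζ₂) :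
    (∃ θ, g₁ θ = θ) ∨ (∃ θ, g₂ θ = θ) ∨ ∃ θ, g₁ θ = g₂ θ := by
  by_contra! H
  obtain ⟨hfix₁, hfix₂, hcoin⟩ := H
  obtain ⟨F₁, hF₁, hF₁α, hF₁g⟩ := exists_real_lift (hg₁.comp continuous_quotient_mk') h₁α.symm
  obtain ⟨F₂, hF₂, hF₂α, hF₂g⟩ := exists_real_lift (hg₂.comp continuous_quotient_mk') h₂α.symm
  obtain ⟨m₁, hm₁⟩ := coe_eq_coe_iff_exists_int.1 ((hF₁g β).trans h₁β)
  obtain ⟨m₂, hm₂⟩ := coe_eq_coe_iff_exists_int.1 ((hF₂g β).trans h₂β)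
  -- `F₁ - id`, `F₂ - id` and `F₁ - F₂` never take integer values, so each has the same floor at
  -- `α` and at `β`; for the winding numbers `m₁`, `m₂` this forces `m₁ ≥ 1`, `m₂ ≤ 0`, `m₁ ≤ m₂`.
  have e₁ := floor_eq_floor_of_forall_ne_intCast (hF₁.sub continuous_id) (fun x n hn =>
    hfix₁ x ((hF₁g x).symm.trans (coe_eq_coe_iff_exists_int.2 ⟨n, hn⟩))) α β
  have e₂ := floor_eq_floor_of_forall_ne_intCast (hF₂.sub continuous_id) (fun x n hn =>
    hfix₂ x ((hF₂g x).symm.trans (coe_eq_coe_iff_exists_int.2 ⟨n, hn⟩))) α β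
  have e₃ := floor_eq_floor_of_forall_ne_intCast (hF₁.sub hF₂) (fun x n hn =>
    hcoin x ((hF₁g x).symm.trans ((coe_eq_coe_iff_exists_int.2 ⟨n, hn⟩).trans (hF₂g x)))) α β
  simp only [Pi.sub_apply, id, hF₁α, hF₂α] at e₁ e₂ e₃
  obtain ⟨hαζ₁, hζ₁β⟩ := hζ₁
  obtain ⟨hβζ₂, hζ₂α⟩ := hζ₂
  rw [Int.floor_eq_zero_iff.2 ⟨by linarith, by linarith⟩, eq_comm, Int.floor_eq_zero_iff] at e₁ e₂
  rw [(Int.floor_eq_iff.2 ⟨by push_cast; linarith, by push_cast; linarith⟩ : ⌊ζ₁ - ζ₂⌋ = -1),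
    eq_comm, Int.floor_eq_iff] at e₃
  have hm₁pos : (0 : ℝ) < m₁ := by linarith [e₁.1]
  have hm₂lt : (m₂ : ℝ) < 1 := by linarith [e₂.2]
  have hm₁₂ : (m₁ : ℝ) - m₂ < 1 := by push_cast at e₃; linarith [e₃.2]
  norm_cast at hm₁pos hm₂lt hm₁₂
  omega

end AddCircle

theorem exists_fixedPoint_or_coincidence_of_arc {ι : Type*} [TopologicalSpace ι]
    [DiscreteTopology ι] {ψ₁ ψ₂ : ι × 𝕋 → ι × 𝕋} (hψ₁ : Continuous ψ₁) (hψ₂ : Continuous ψ₂)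
    {i : ι} {α β ζ₁ ζ₂ : ℝ} (hζ₁ : ζ₁ ∈ Ioo α β) (hζ₂ : ζ₂ ∈ Ioo β (α + 1))
    (h₁α : ψ₁ (i, α) = (i, (ζ₁ : 𝕋))) (h₁β : ψ₁ (i, β) = (i, (ζ₁ : 𝕋)))
    (h₂α : ψ₂ (i, α) = (i, (ζ₂ : 𝕋))) (h₂β : ψ₂ (i, β) = (i, (ζ₂ : 𝕋))) :
    (∃ θ, ψ₁ (i, θ) = (i, θ)) ∨ (∃ θ, ψ₂ (i, θ) = (i, θ)) ∨ ∃ θ, ψ₁ (i, θ) = ψ₂ (i, θ) := by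
  have hmk : ∀ {ψ : ι × 𝕋 → ι × 𝕋}, Continuous ψ → ∀ {ζ : 𝕋}, ψ (i, α) = (i, ζ) →
      ∀ θ, ψ (i, θ) = (i, (ψ (i, θ)).2) := fun {ψ} hψ _ h θ =>
    Prod.ext ((fst_apply_mk_eq hψ i θ α).trans (congrArg Prod.fst h) : (ψ (i, θ)).1 = i) rfl
  have hg : ∀ {ψ : ι × 𝕋 → ι × 𝕋}, Continuous ψ → Continuous fun θ : 𝕋 => (ψ (i, θ)).2 :=
    fun hψ => continuous_snd.comp (hψ.comp (Continuous.prodMk_right i))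
  rcases AddCircle.exists_fixedPoint_or_coincidence_of_arc (hg hψ₁) (hg hψ₂) hζ₁ hζ₂
    (congrArg Prod.snd h₁α) (congrArg Prod.snd h₁β) (congrArg Prod.snd h₂α)
    (congrArg Prod.snd h₂β) with ⟨θ, hθ⟩ | ⟨θ, hθ⟩ | ⟨θ, hθ⟩
  · exact .inl ⟨θ, by rw [hmk hψ₁ h₁α θ, hθ]⟩
  · exact .inr (.inl ⟨θ, by rw [hmk hψ₂ h₂α θ, hθ]⟩)
  · exact .inr (.inr ⟨θ, by rw [hmk hψ₁ h₁α θ, hmk hψ₂ h₂α θ, hθ]⟩)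

structure IsMinimalSemigroupAction {S X : Type*} [AddCommSemigroup S] [TopologicalSpace X]
    (φ : S → X → X) : Prop where
  continuous : ∀ s, Continuous (φ s)
  comp_eq : ∀ s t, φ s ∘ φ t = φ (s + t)
  dense_orbit : ∀ x, Dense (range fun s => φ s x)

namespace IsMinimalSemigroupAction

section

variable {S X : Type*} [AddCommSemigroup S] [TopologicalSpace X] {φ : S → X → X}

theorem commute (hφ : IsMinimalSemigroupAction φ) (s t : S) :
    Function.Commute (φ s) (φ t) := fun x => by
  rw [← comp_apply (f := φ s), hφ.comp_eq, add_comm, ← hφ.comp_eq, comp_apply]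

theorem eq_univ_of_mapsTo (hφ : IsMinimalSemigroupAction φ) {K : Set X} (hK : IsClosed K)
    (hne : K.Nonempty) (hinv : ∀ s, MapsTo (φ s) K K) : K = univ := by
  obtain ⟨z, hz⟩ := hne
  have hdense : Dense K := (hφ.dense_orbit z).mono (range_subset_iff.2 fun s => hinv s hz)
  rw [← hK.closure_eq, hdense.closure_eq]

theorem eq_of_apply_eq [T2Space X] (hφ : IsMinimalSemigroupAction φ) {f g : X → X}
    (hf : Continuous f) (hg : Continuous g) (hfφ : ∀ s, Function.Commute f (φ s))
    (hgφ : ∀ s, Function.Commute g (φ s)) {x₀ : X} (hx₀ : f x₀ = g x₀) : f = g := by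
  have hK := hφ.eq_univ_of_mapsTo (isClosed_eq hf hg) ⟨x₀, hx₀⟩ fun s x (hx : f x = g x) =>
    show f (φ s x) = g (φ s x) by rw [hfφ s x, hgφ s x, hx]
  exact funext fun x => (hK ▸ mem_univ x : x ∈ {x | f x = g x})

theorem eq_id_of_apply_eq_self [T2Space X] (hφ : IsMinimalSemigroupAction φ) {r : S} {x₀ : X}
    (hx₀ : φ r x₀ = x₀) : φ r = id :=
  hφ.eq_of_apply_eq (hφ.continuous r) continuous_id (hφ.commute r)
    (fun _ => Function.Commute.id_left) hx₀

theorem eq_of_apply_eq_apply [T2Space X] (hφ : IsMinimalSemigroupAction φ) {r r' : S} {x₀ : X}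
    (hx₀ : φ r x₀ = φ r' x₀) : φ r = φ r' :=
  hφ.eq_of_apply_eq (hφ.continuous r) (hφ.continuous r') (hφ.commute r) (hφ.commute r') hx₀

theorem surjective [CompactSpace X] [T2Space X] (hφ : IsMinimalSemigroupAction φ) (s : S) :
    Surjective (φ s) := fun y => by
  refine range_eq_univ.1 (hφ.eq_univ_of_mapsTo (isCompact_range (hφ.continuous s)).isClosed
    ⟨φ s y, mem_range_self y⟩ ?_) y
  rintro u _ ⟨w, rfl⟩
  exact ⟨φ u w, hφ.commute s u w⟩

theorem exists_homeomorph_of_injective [CompactSpace X] [T2Space X]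
    (hφ : IsMinimalSemigroupAction φ) (hinj : ∀ s, Injective (φ s)) :
    ∃ h : S → X ≃ₜ X, (∀ s t, h s * h t = h (s + t)) ∧
      ∀ x, Dense {y | ∃ g ∈ Subgroup.closure (range h), g x = y} := by
  let h : S → X ≃ₜ X := fun s =>
    (hφ.continuous s).homeoOfEquivCompactToT2 (f := .ofBijective _ ⟨hinj s, hφ.surjective s⟩)
  refine ⟨h, fun s t => DFunLike.ext' (hφ.comp_eq s t), fun x => (hφ.dense_orbit x).mono ?_⟩
  rintro _ ⟨s, rfl⟩
  exact ⟨h s, Subgroup.subset_closure (mem_range_self s), rfl⟩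

end

section

variable {S ι : Type*} [AddCommSemigroup S] [TopologicalSpace ι] [DiscreteTopology ι]
  {φ : S → ι × 𝕋 → ι × 𝕋}

theorem exists_apply_eq_mk_mem_Ioo (hφ : IsMinimalSemigroupAction φ) (x : ι × 𝕋) (i : ι)
    {u v : ℝ} (huv : u < v) : ∃ t, ∃ ζ ∈ Ioo u v, φ t x = (i, (ζ : 𝕋)) := by
  have hU : IsOpen ({i} ×ˢ ((↑) '' Ioo u v : Set 𝕋)) :=
    (isOpen_discrete _).prod (QuotientAddGroup.isOpenMap_coe _ isOpen_Ioo)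
  obtain ⟨_, ⟨t, rfl⟩, hti, ζ, hζ, hζt⟩ := (hφ.dense_orbit x).exists_mem_open hU
    ⟨(i, ((u + v) / 2 : ℝ)), rfl, _, ⟨by linarith, by linarith⟩, rfl⟩
  exact ⟨t, ζ, hζ, Prod.ext hti hζt.symm⟩

theorem injective_of_circles [Finite ι] (hφ : IsMinimalSemigroupAction φ) (s₀ : S) :
    Injective (φ s₀) := by
  intro a b hab
  by_contra hne
  have hi : a.1 = b.1 :=
    fst_eq_of_fst_apply_eq (hφ.continuous s₀) (hφ.surjective s₀) (congrArg Prod.fst hab)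
  obtain ⟨α, β, hα, hβ, hαβ, hβα⟩ :=
    AddCircle.exists_coe_eq_coe_eq_of_ne fun h => hne (Prod.ext hi h)
  obtain ⟨t₁, ζ₁, hζ₁, ht₁⟩ := hφ.exists_apply_eq_mk_mem_Ioo (φ s₀ a) a.1 hαβ
  obtain ⟨t₂, ζ₂, hζ₂, ht₂⟩ := hφ.exists_apply_eq_mk_mem_Ioo (φ s₀ a) a.1 hβα
  have ha : ((a.1, α) : ι × 𝕋) = a := by rw [hα]
  have hb : ((a.1, β) : ι × 𝕋) = b := by rw [hβ, hi]
  have hG : ∀ {t : S} {ζ : 𝕋}, φ t (φ s₀ a) = (a.1, ζ) →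
      φ (t + s₀) (a.1, α) = (a.1, ζ) ∧ φ (t + s₀) (a.1, β) = (a.1, ζ) := fun h => by
    rw [ha, hb, ← hφ.comp_eq, comp_apply, comp_apply, ← hab]
    exact ⟨h, h⟩
  have hcoe : ∀ {x y : ℝ}, x ∈ Ico α (α + 1) → y ∈ Ico α (α + 1) → (x : 𝕋) = y → x = y :=
    fun hx hy => (AddCircle.coe_eq_coe_iff_of_mem_Ico hx hy).1
  rcases exists_fixedPoint_or_coincidence_of_arc (hφ.continuous _) (hφ.continuous _) hζ₁ hζ₂
    (hG ht₁).1 (hG ht₁).2 (hG ht₂).1 (hG ht₂).2 with ⟨θ, hθ⟩ | ⟨θ, hθ⟩ | ⟨θ, hθ⟩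
  · have := congrArg Prod.snd (congrFun (hφ.eq_id_of_apply_eq_self hθ) (a.1, α))
    rw [(hG ht₁).1] at this
    exact hζ₁.1.ne' (hcoe ⟨hζ₁.1.le, by linarith [hζ₁.2]⟩ ⟨le_rfl, by linarith⟩ this)
  · have := congrArg Prod.snd (congrFun (hφ.eq_id_of_apply_eq_self hθ) (a.1, α))
    rw [(hG ht₂).1] at this
    exact (hαβ.trans hζ₂.1).ne' (hcoe ⟨by linarith [hζ₂.1], hζ₂.2⟩ ⟨le_rfl, by linarith⟩ this)
  · have := congrArg Prod.snd (congrFun (hφ.eq_of_apply_eq_apply hθ) (a.1, α))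
    rw [(hG ht₁).1, (hG ht₂).1] at this
    exact (hζ₁.2.trans hζ₂.1).ne
      (hcoe ⟨hζ₁.1.le, by linarith [hζ₁.2]⟩ ⟨by linarith [hζ₂.1], hζ₂.2⟩ this)

end

end IsMinimalSemigroupAction

def Homeomorph.setStabilizer {X : Type*} [TopologicalSpace X] (K : Set X) :
    Subgroup (X ≃ₜ X) where
  carrier := {g | ⇑g ⁻¹' K = K}
  mul_mem' {g₁ g₂} (h₁ : ⇑g₁ ⁻¹' K = K) (h₂ : ⇑g₂ ⁻¹' K = K) :=
    show ⇑g₂ ⁻¹' (⇑g₁ ⁻¹' K) = K by rw [h₁, h₂]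
  one_mem' := preimage_id
  inv_mem' {g} (hg : ⇑g ⁻¹' K = K) :=
    calc ⇑g.symm ⁻¹' K = g '' (g ⁻¹' K) := by rw [g.preimage_symm, hg]
      _ = K := image_preimage_eq K g.surjective

section GeneratedSubgroup

variable {S X : Type*} [AddCommSemigroup S] [TopologicalSpace X] {h : S → X ≃ₜ X}

omit [AddCommSemigroup S] in
theorem eq_univ_of_dense_closure_orbit
    (hdense : ∀ x, Dense {y | ∃ g ∈ Subgroup.closure (range h), g x = y}) {K : Set X}
    (hK : IsClosed K) (hne : K.Nonempty) (hinv : ∀ s, ⇑(h s) ⁻¹' K = K) : K = univ := by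
  obtain ⟨z, hz⟩ := hne
  have hle : Subgroup.closure (range h) ≤ Homeomorph.setStabilizer K :=
    (Subgroup.closure_le _).2 (range_subset_iff.2 hinv)
  have hsub : {y | ∃ g ∈ Subgroup.closure (range h), g z = y} ⊆ K := by
    rintro _ ⟨g, hg, rfl⟩
    show z ∈ ⇑g ⁻¹' K
    rwa [show ⇑g ⁻¹' K = K from hle hg]
  rw [← hK.closure_eq, ((hdense z).mono hsub).closure_eq]

theorem exists_preimage_eq_subset [CompactSpace X] [Nonempty S]
    (hmul : ∀ s t, h s * h t = h (s + t)) {Y : Set X} (hYc : IsClosed Y) (hYne : Y.Nonempty)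
    (hY : ∀ s, MapsTo (h s) Y Y) :
    ∃ K ⊆ Y, IsClosed K ∧ K.Nonempty ∧ ∀ s, ⇑(h s) ⁻¹' K = K := by
  have hcomp : ∀ s t, ⇑(h (s + t)) = h s ∘ h t := fun s t => by rw [← hmul]; rfl
  have hanti : ∀ s t, ⇑(h (s + t)) '' Y ⊆ h t '' Y := fun s t => by
    rw [add_comm, hcomp, image_comp]
    exact image_mono (hY s).image_subset
  have hcl : ∀ s, IsClosed (⇑(h s) '' Y) := fun s => (h s).isClosedMap Y hYc
  obtain ⟨s₀⟩ := ‹Nonempty S›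
  refine ⟨⋂ s, ⇑(h s) '' Y, (iInter_subset _ s₀).trans (hY s₀).image_subset,
    isClosed_iInter hcl, ?_, fun s => ?_⟩
  · refine IsCompact.nonempty_iInter_of_directed_nonempty_isCompact_isClosed _
      (fun s t => ⟨s + t, add_comm t s ▸ hanti t s, hanti s t⟩) (fun s => hYne.image _)
      (fun s => (hcl s).isCompact) hcl
  · have hinv : ⇑(h s) '' ⋂ u, ⇑(h u) '' Y = ⋂ u, ⇑(h u) '' Y := by
      rw [image_iInter (h s).bijective]
      simp_rw [← image_comp, ← hcomp]
      exact subset_antisymm (subset_iInter fun u => (iInter_subset _ u).trans (hanti s u))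
        (subset_iInter fun u => iInter_subset _ (s + u))
    exact (congrArg (⇑(h s) ⁻¹' ·) hinv).symm.trans ((h s).preimage_image _)

theorem dense_orbit_of_dense_closure_orbit [CompactSpace X] [Nonempty S]
    (hmul : ∀ s t, h s * h t = h (s + t))
    (hdense : ∀ x, Dense {y | ∃ g ∈ Subgroup.closure (range h), g x = y}) (x : X) :
    Dense (range fun s => h s x) := by
  have hY : ∀ s, MapsTo (h s) (closure (range fun t => h t x)) (closure (range fun t => h t x)) :=
    fun s => MapsTo.closure (fun _ ⟨t, ht⟩ => ⟨s + t, ht ▸ DFunLike.congr_fun (hmul s t).symm x⟩)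
      (h s).continuous
  obtain ⟨s⟩ := ‹Nonempty S›
  obtain ⟨K, hKY, hKc, hKne, hKinv⟩ := exists_preimage_eq_subset hmul isClosed_closure
    ⟨h s x, subset_closure (mem_range_self s)⟩ hY
  exact dense_iff_closure_eq.2 <| eq_univ_of_univ_subset <|
    eq_univ_of_dense_closure_orbit hdense hKc hKne hKinv ▸ hKY

omit [AddCommSemigroup S] in
theorem not_dense_closure_orbit_of_isEmpty [IsEmpty S] [T1Space X] [Nontrivial X] (x : X) :
    ¬Dense {y | ∃ g ∈ Subgroup.closure (range h), g x = y} := by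
  rw [range_eq_empty h, Subgroup.closure_empty, dense_iff_closure_eq]
  simp [Subgroup.mem_bot]

end GeneratedSubgroup

theorem minimal_semigroup_action_iff_minimal_generated_subgroup_general
    {S : Type*} [AddCommSemigroup S] (ℓ : ℕ) :
    (∃ φ : S → (Fin ℓ × AddCircle (1:ℝ)) → (Fin ℓ × AddCircle (1:ℝ)),
        (∀ s, Continuous (φ s)) ∧ (∀ s t, φ s ∘ φ t = φ (s + t)) ∧
        (∀ x, Dense (Set.range fun s => φ s x))) ↔
    (∃ h : S → (Fin ℓ × AddCircle (1:ℝ)) ≃ₜ (Fin ℓ × AddCircle (1:ℝ)),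
        (∀ s t, h s * h t = h (s + t)) ∧
        (∀ x, Dense {y | ∃ g ∈ Subgroup.closure (Set.range h), g x = y})) := by
  constructor
  · rintro ⟨φ, hcont, hcomp, hdense⟩
    have hφ : IsMinimalSemigroupAction φ := ⟨hcont, hcomp, hdense⟩
    exact hφ.exists_homeomorph_of_injective hφ.injective_of_circles
  · rintro ⟨h, hmul, hdense⟩
    refine ⟨fun s => h s, fun s => (h s).continuous, fun s t => congrArg DFunLike.coe (hmul s t),
      fun x => ?_⟩
    rcases isEmpty_or_nonempty S with _ | _
    · have : Nonempty (Fin ℓ) := ⟨x.1⟩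
      exact absurd (hdense x) (not_dense_closure_orbit_of_isEmpty x)
    · exact dense_orbit_of_dense_closure_orbit hmul hdense x

theorem minimal_semigroup_action_iff_minimal_generated_subgroup
    {S : Type*} [AddCommSemigroup S] (ℓ : ℕ) (hℓ : 0 < ℓ) :
    (∃ φ : S → (Fin ℓ × AddCircle (1:ℝ)) → (Fin ℓ × AddCircle (1:ℝ)),
        (∀ s, Continuous (φ s)) ∧ (∀ s t, φ s ∘ φ t = φ (s + t)) ∧
        (∀ x, Dense (Set.range fun s => φ s x))) ↔
    (∃ h : S → (Fin ℓ × AddCircle (1:ℝ)) ≃ₜ (Fin ℓ × AddCircle (1:ℝ)),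
        (∀ s t, h s * h t = h (s + t)) ∧
        (∀ x, Dense {y | ∃ g ∈ Subgroup.closure (Set.range h), g x = y})) :=
  minimal_semigroup_action_iff_minimal_generated_subgroup_general ℓ
end

section
/- Let H be a dense subgroup of the circle group S¹, K an abelian group of finite cardinality ℓ, and f : K × K → H a symmetric 2-cocycle. Define, for each g = (k,h) ∈ K ×_f H, the map φ_g : K × S¹ → K × S¹ by φ_{(k,h)}(a,b) = (k+a, b+h+f(k,a)). Then these maps form an effective group action of the extension group K ×_f H on the space X = K × S¹ (a disjoint union of ℓ circles), and this action is minimal. -/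
/-!
The cocycle identity combined with symmetry gives
`f(k', a) + f(k, k' + a) = f(k, k') + f(k + k', a)`, which is exactly what composing two of the
maps requires. A fixed point forces `k = 0` and then `h = f(0, a) = 0`, so the action is even
free. For minimality, the orbit of `(a, b)` meets the circle over `a'` in a translate of `H`,
namely `b + f(a' - a, a) + H`, which is dense.
-/

open Set

section CocycleAction

variable {K G : Type*} [AddCommGroup K] [AddCommGroup G] {H : AddSubgroup G}

def cocycleAct (f : K → K → H) (g : K × H) (x : K × G) : K × G :=
  (g.1 + x.1, x.2 + g.2 + f g.1 x.1)

/-- The group law of the extension `K ×_f H`. -/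
def cocycleAdd (f : K → K → H) (g g' : K × H) : K × H :=
  (g.1 + g'.1, g.2 + g'.2 + f g.1 g'.1)

theorem symm_cocycle_identity {A : Type*} [AddCommGroup A] {f : K → K → A}
    (hsym : ∀ k₁ k₂, f k₁ k₂ = f k₂ k₁)
    (hcoc : ∀ k₁ k₂ k₃, f k₁ k₂ + f (k₁ + k₂) k₃ = f k₂ k₃ + f (k₂ + k₃) k₁) (k k' a : K) :
    f k' a + f k (k' + a) = f k k' + f (k + k') a := by
  rw [hcoc, hsym k]

theorem cocycleAct_cocycleAct {f : K → K → H} (hsym : ∀ k₁ k₂, f k₁ k₂ = f k₂ k₁)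
    (hcoc : ∀ k₁ k₂ k₃, f k₁ k₂ + f (k₁ + k₂) k₃ = f k₂ k₃ + f (k₂ + k₃) k₁)
    (g g' : K × H) (x : K × G) :
    cocycleAct f g (cocycleAct f g' x) = cocycleAct f (cocycleAdd f g g') x := by
  have key := congrArg ((↑) : H → G) (symm_cocycle_identity hsym hcoc g.1 g'.1 x.1)
  push_cast at key
  simp only [cocycleAct, cocycleAdd, Prod.mk.injEq, add_assoc, AddSubgroup.coe_add, true_and]
  rw [← key]
  abel

theorem eq_zero_of_cocycleAct_eq_self {f : K → K → H} (hf : ∀ k, f 0 k = 0) {g : K × H}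
    {x : K × G} (hg : cocycleAct f g x = x) : g = 0 := by
  obtain ⟨hk, hh⟩ := Prod.mk.inj hg
  have hk₀ : g.1 = 0 := add_eq_right.mp hk
  rw [hk₀, hf, ZeroMemClass.coe_zero, add_zero, add_eq_left, ZeroMemClass.coe_eq_zero] at hh
  exact Prod.ext hk₀ hh

variable [TopologicalSpace K] [TopologicalSpace G]

theorem continuous_cocycleAct [DiscreteTopology K] [ContinuousAdd G] (f : K → K → H)
    (g : K × H) : Continuous (cocycleAct (G := G) f g) :=
  (continuous_of_discreteTopology.comp continuous_fst).prodMk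
    ((continuous_snd.add continuous_const).add
      ((continuous_of_discreteTopology (f := fun k => (f g.1 k : G))).comp continuous_fst))

end CocycleAction

theorem dense_of_forall_dense_slice {X Y : Type*} [TopologicalSpace X] [TopologicalSpace Y]
    {S : Set (X × Y)} (hS : ∀ a, Dense {b | (a, b) ∈ S}) : Dense S := by
  refine dense_iff_inter_open.mpr fun U hU ⟨⟨a, t⟩, hat⟩ => ?_
  obtain ⟨b, hbS, hbU⟩ :=
    (hS a).exists_mem_open (hU.preimage (Continuous.prodMk_right a)) ⟨t, hat⟩
  exact ⟨(a, b), hbU, hbS⟩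

theorem dense_range_cocycleAct {K G : Type*} [AddCommGroup K] [AddCommGroup G]
    [TopologicalSpace K] [TopologicalSpace G] [IsTopologicalAddGroup G] {H : AddSubgroup G}
    (hH : Dense (H : Set G)) (f : K → K → H) (x : K × G) :
    Dense (range (cocycleAct f · x)) := by
  refine dense_of_forall_dense_slice fun a => ?_
  refine (hH.vadd (x.2 + f (a - x.1) x.1)).mono ?_
  rintro _ ⟨h, hh, rfl⟩
  refine ⟨(a - x.1, ⟨h, hh⟩), ?_⟩
  simp only [cocycleAct, sub_add_cancel, vadd_eq_add]
  congr 1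
  abel

theorem cocycle_extension_minimal_effective_action_general
    {K : Type*} [AddCommGroup K] [TopologicalSpace K] [DiscreteTopology K]
    (H : AddSubgroup (AddCircle (1:ℝ))) (hH : Dense (H : Set (AddCircle (1:ℝ))))
    (f : K → K → H)
    (hsym : ∀ k₁ k₂, f k₁ k₂ = f k₂ k₁)
    (hcoc : ∀ k₁ k₂ k₃, f k₁ k₂ + f (k₁ + k₂) k₃ = f k₂ k₃ + f (k₂ + k₃) k₁)
    (hzero : ∀ k, f 0 k = 0 ∧ f k 0 = 0) :
    (∀ g : K × H, Continuous (fun x : K × AddCircle (1:ℝ) =>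
        ((g.1 + x.1, x.2 + (g.2 : AddCircle (1:ℝ)) + ((f g.1 x.1 : H) : AddCircle (1:ℝ)))
          : K × AddCircle (1:ℝ)))) ∧
    (∀ g g' : K × H, ∀ x : K × AddCircle (1:ℝ),
        (g.1 + (g'.1 + x.1),
          (x.2 + (g'.2 : AddCircle (1:ℝ)) + ((f g'.1 x.1 : H) : AddCircle (1:ℝ)))
            + (g.2 : AddCircle (1:ℝ)) + ((f g.1 (g'.1 + x.1) : H) : AddCircle (1:ℝ)))
        = ((g.1 + g'.1) + x.1,
            x.2 + ((g.2 + g'.2 + f g.1 g'.1 : H) : AddCircle (1:ℝ))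
              + ((f (g.1 + g'.1) x.1 : H) : AddCircle (1:ℝ)))) ∧
    (∀ g : K × H, (∀ x : K × AddCircle (1:ℝ),
        (g.1 + x.1, x.2 + (g.2 : AddCircle (1:ℝ)) + ((f g.1 x.1 : H) : AddCircle (1:ℝ))) = x)
        → g = 0) ∧
    (∀ x : K × AddCircle (1:ℝ), Dense {y : K × AddCircle (1:ℝ) | ∃ g : K × H,
        (g.1 + x.1, x.2 + (g.2 : AddCircle (1:ℝ)) + ((f g.1 x.1 : H) : AddCircle (1:ℝ))) = y}) :=
  ⟨continuous_cocycleAct f, cocycleAct_cocycleAct hsym hcoc,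
    fun _ hg => eq_zero_of_cocycleAct_eq_self (fun k => (hzero k).1) (hg 0),
    dense_range_cocycleAct hH f⟩

theorem cocycle_extension_minimal_effective_action
    {K : Type*} [AddCommGroup K] [Fintype K] [TopologicalSpace K] [DiscreteTopology K]
    (H : AddSubgroup (AddCircle (1:ℝ))) (hH : Dense (H : Set (AddCircle (1:ℝ))))
    (f : K → K → H)
    (hsym : ∀ k₁ k₂, f k₁ k₂ = f k₂ k₁)
    (hcoc : ∀ k₁ k₂ k₃, f k₁ k₂ + f (k₁ + k₂) k₃ = f k₂ k₃ + f (k₂ + k₃) k₁)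
    (hzero : ∀ k, f 0 k = 0 ∧ f k 0 = 0) :
    (∀ g : K × H, Continuous (fun x : K × AddCircle (1:ℝ) =>
        ((g.1 + x.1, x.2 + (g.2 : AddCircle (1:ℝ)) + ((f g.1 x.1 : H) : AddCircle (1:ℝ)))
          : K × AddCircle (1:ℝ)))) ∧
    (∀ g g' : K × H, ∀ x : K × AddCircle (1:ℝ),
        (g.1 + (g'.1 + x.1),
          (x.2 + (g'.2 : AddCircle (1:ℝ)) + ((f g'.1 x.1 : H) : AddCircle (1:ℝ)))
            + (g.2 : AddCircle (1:ℝ)) + ((f g.1 (g'.1 + x.1) : H) : AddCircle (1:ℝ)))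
        = ((g.1 + g'.1) + x.1,
            x.2 + ((g.2 + g'.2 + f g.1 g'.1 : H) : AddCircle (1:ℝ))
              + ((f (g.1 + g'.1) x.1 : H) : AddCircle (1:ℝ)))) ∧
    (∀ g : K × H, (∀ x : K × AddCircle (1:ℝ),
        (g.1 + x.1, x.2 + (g.2 : AddCircle (1:ℝ)) + ((f g.1 x.1 : H) : AddCircle (1:ℝ))) = x)
        → g = 0) ∧
    (∀ x : K × AddCircle (1:ℝ), Dense {y : K × AddCircle (1:ℝ) | ∃ g : K × H,
        (g.1 + x.1, x.2 + (g.2 : AddCircle (1:ℝ)) + ((f g.1 x.1 : H) : AddCircle (1:ℝ))) = y}) :=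
  cocycle_extension_minimal_effective_action_general H hH f hsym hcoc hzero
end
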